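/- Let A = {a₁ < a₂ < … < a_N} be a finite set of reals, and for 1 ≤ j ≤ N−1 let i(j) = 1 + |{h ∈ H(A) : h < a_{j+1} − a_j}|. Then |A + A − A| ≥ Σ_{j=1}^{N−1} i(j); in fact, for each j the interval [a_j, a_{j+1}) contains at least i(j) elements of A + A − A. -/

import Mathlib

/-!
Let `a_j < a_{j+1}` be consecutive elements of `A`. Every `x = a_j + h` with `h = 0` or with
`h ∈ H(A)` and `h < a_{j+1} - a_j` lies in `A + A - A` (write `h = p - q` with `p, q ∈ A`) and in
`[a_j, a_{j+1})`; these elements are distinct because the elements of `H(A)` are positive. The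
intervals `[a_j, a_{j+1})` are pairwise disjoint, so summing over `j` bounds `|A + A - A|`.
-/

open Finset Pointwise

/-- The list of consecutive differences of a list of reals. -/
def diffList : List ℝ → List ℝ
  | a :: b :: rest => (b - a) :: diffList (b :: rest)
  | _ => []

/-- `iterSum n A = A + ⋯ + A` (`n` copies), with `iterSum 0 A = {0}`. -/
noncomputable def iterSum : ℕ → Finset ℝ → Finset ℝ
  | 0, _ => {0}
  | n + 1, A => A + iterSum n A

/-- `H(A)`: the set of consecutive differences `a_{i+1} - a_i` of a finite set of reals. -/
noncomputable def consecDiffs (A : Finset ℝ) : Finset ℝ :=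
  (diffList (A.sort (· ≤ ·))).toFinset

lemma mem_diffList : ∀ (l : List ℝ) (h : ℝ),
    h ∈ diffList l ↔ ∃ i : ℕ, ∃ hi : i + 1 < l.length, h = l[i + 1] - l[i]
  | [], h => by simp [diffList]
  | [a], h => by simp [diffList]
  | a :: b :: rest, h => by
    rw [diffList, List.mem_cons, mem_diffList (b :: rest) h]
    constructor
    · rintro (rfl | ⟨i, hi, rfl⟩)
      · exact ⟨0, by simp, by simp⟩
      · exact ⟨i + 1, by simpa using hi, by simp⟩
    · rintro ⟨i, hi, rfl⟩
      match i with
      | 0 => simp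
      | i + 1 => exact .inr ⟨i, by simpa using hi, by simp⟩

lemma iterSum_two_sub_iterSum_one (A : Finset ℝ) : iterSum 2 A - iterSum 1 A = A + A - A := by
  simp only [iterSum, singleton_zero, add_zero]

section SortedGetD

variable {α : Type*} [LinearOrder α] {A : Finset α} {i j : ℕ} (d : α)

lemma Finset.getD_sort_mem (hj : j < #A) : (A.sort (· ≤ ·)).getD j d ∈ A := by
  rw [List.getD_eq_getElem _ _ (by rwa [length_sort])]
  exact (mem_sort _).1 (List.getElem_mem _)

lemma Finset.getD_sort_lt_getD_sort (hij : i < j) (hj : j < #A) :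
    (A.sort (· ≤ ·)).getD i d < (A.sort (· ≤ ·)).getD j d := by
  have hjL : j < (A.sort (· ≤ ·)).length := by rwa [length_sort]
  rw [List.getD_eq_getElem _ _ (hij.trans hjL), List.getD_eq_getElem _ _ hjL]
  exact (sortedLT_sort A).strictMono_get (show (⟨i, hij.trans hjL⟩ : Fin _) < ⟨j, hjL⟩ from hij)

lemma Finset.monotoneOn_getD_sort :
    MonotoneOn (fun j => (A.sort (· ≤ ·)).getD j d) (Set.Iic (#A - 1)) := by
  intro i _ j hj hij
  rcases hij.eq_or_lt with rfl | hij
  · exact le_rfl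
  · exact (getD_sort_lt_getD_sort d hij (by rw [Set.mem_Iic] at hj; omega)).le

end SortedGetD

lemma consecDiffs_subset_sub (A : Finset ℝ) : consecDiffs A ⊆ A - A := by
  intro h hh
  rw [consecDiffs, List.mem_toFinset, mem_diffList] at hh
  obtain ⟨i, hi, rfl⟩ := hh
  exact sub_mem_sub ((mem_sort _).1 (List.getElem_mem _)) ((mem_sort _).1 (List.getElem_mem _))

lemma pos_of_mem_consecDiffs {A : Finset ℝ} {h : ℝ} (hh : h ∈ consecDiffs A) : 0 < h := by
  rw [consecDiffs, List.mem_toFinset, mem_diffList] at hh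
  obtain ⟨i, hi, rfl⟩ := hh
  simpa using (sortedLT_sort A).strictMono_get
    (show (⟨i, by omega⟩ : Fin _) < ⟨i + 1, hi⟩ from i.lt_succ_self)

lemma one_add_card_filter_lt_le_card_filter_Ico {G : Type*} [AddCommGroup G] [LinearOrder G]
    [IsOrderedAddMonoid G] [DecidableEq G] {A D : Finset G} (hDA : D ⊆ A - A)
    (hD : ∀ h ∈ D, 0 < h) {a t : G} (ha : a ∈ A) (hat : a < t) :
    1 + #(D.filter (· < t - a)) ≤ #((A + A - A).filter (fun x => a ≤ x ∧ x < t)) := by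
  have h0 : (0 : G) ∉ D.filter (· < t - a) := fun h0 => (hD 0 (mem_filter.1 h0).1).false
  rw [add_comm, ← card_insert_of_notMem h0,
    ← card_image_of_injective _ (add_right_injective a)]
  refine card_le_card fun x hx => ?_
  obtain ⟨h, hh, rfl⟩ := mem_image.1 hx
  rcases mem_insert.1 hh with rfl | hh
  · rw [add_zero]
    refine mem_filter.2 ⟨?_, le_rfl, hat⟩
    simpa using sub_mem_sub (add_mem_add ha ha) ha
  · obtain ⟨hhD, hht⟩ := mem_filter.1 hh
    obtain ⟨p, hp, q, hq, rfl⟩ := mem_sub.1 (hDA hhD)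
    refine mem_filter.2 ⟨?_, le_add_of_nonneg_right (hD _ hhD).le, lt_sub_iff_add_lt'.1 hht⟩
    rw [← add_sub_assoc]
    exact sub_mem_sub (add_mem_add ha hp) hq

lemma sum_card_filter_Ico_le_card {α : Type*} [LinearOrder α] (B : Finset α) {t : ℕ → α}
    {n : ℕ} (ht : MonotoneOn t (Set.Iic n)) :
    ∑ j ∈ range n, #(B.filter (fun x => t j ≤ x ∧ x < t (j + 1))) ≤ #B := by
  have hdisj : ((range n : Finset ℕ) : Set ℕ).PairwiseDisjoint
      (fun j => B.filter (fun x => t j ≤ x ∧ x < t (j + 1))) := by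
    suffices ∀ i ∈ range n, ∀ j ∈ range n, i < j →
        Disjoint (B.filter (fun x => t i ≤ x ∧ x < t (i + 1)))
          (B.filter (fun x => t j ≤ x ∧ x < t (j + 1))) from
      fun i hi j hj hij => hij.lt_or_gt.elim (this i hi j hj) fun h => (this j hj i hi h).symm
    intro i _ j hj hij
    have hj := mem_range.1 hj
    have hle : t (i + 1) ≤ t j := ht (Set.mem_Iic.2 (by omega)) (Set.mem_Iic.2 (by omega)) hij
    exact disjoint_filter.2 fun x _ hi hj => (hi.2.trans_le hle).not_ge hj.1
  rw [← card_biUnion hdisj]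
  exact card_le_card (biUnion_subset.2 fun _ _ => filter_subset _ _)

/-- Let `A = {a₁ < … < a_N}` and `i(j) = 1 + |{h ∈ H(A) : h < a_{j+1} - a_j}|`. Then for
each `j` the interval `[a_j, a_{j+1})` contains at least `i(j)` elements of `A + A - A`;
consequently `|A + A - A| ≥ Σ_{j=1}^{N-1} i(j)`. Here indices are shifted to start at `0`,
 so `a_j` is `(A.sort (· ≤ ·)).getD (j-1) 0` and `j` runs over `0, …, N-2`. -/
theorem stmt17 (A : Finset ℝ) :
    (∀ j < A.card - 1,
      1 + ((consecDiffs A).filter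
          (fun h => h < (A.sort (· ≤ ·)).getD (j + 1) 0 - (A.sort (· ≤ ·)).getD j 0)).card ≤
        ((iterSum 2 A - iterSum 1 A).filter
          (fun x => (A.sort (· ≤ ·)).getD j 0 ≤ x ∧
            x < (A.sort (· ≤ ·)).getD (j + 1) 0)).card) ∧
    ∑ j ∈ Finset.range (A.card - 1),
        (1 + ((consecDiffs A).filter
          (fun h => h < (A.sort (· ≤ ·)).getD (j + 1) 0 - (A.sort (· ≤ ·)).getD j 0)).card) ≤
      (iterSum 2 A - iterSum 1 A).card := by
  rw [iterSum_two_sub_iterSum_one]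
  have local_bound : ∀ j < #A - 1, _ := fun j hj =>
    one_add_card_filter_lt_le_card_filter_Ico (consecDiffs_subset_sub A)
      (fun _ => pos_of_mem_consecDiffs) (getD_sort_mem 0 (by omega))
      (getD_sort_lt_getD_sort 0 j.lt_succ_self (by omega))
  refine ⟨local_bound, ?_⟩
  calc _ ≤ _ := sum_le_sum fun j hj => local_bound j (mem_range.1 hj)
    _ ≤ _ := sum_card_filter_Ico_le_card _ (monotoneOn_getD_sort 0)
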